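/- arXiv:2306.02989 — 7 statements merged into one kernel-verified Lean document; each statement's English description precedes it below -/
import Mathlib

section
/- Let G be a group generated by a finite conjugacy class X, let m be the order of the conjugation action of any x ∈ X on X, let < be a total order on X, and let z be the maximal element of (X, <). Then for every n ≥ 0, every product of n elements of X (i.e., every element of X^n ⊆ G) can be written in the form x₁^{n₁} x₂^{n₂} ⋯ x_k^{n_k} z^l with k, l ≥ 0, n₁ + n₂ + ⋯ + n_k + l = n, x₁ < x₂ < ⋯ < x_k < z in X, and 1 ≤ n_i ≤ m − 1 for all 1 ≤ i ≤ k. -/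
/-!
Words in `X` are brought into normal form by inserting their letters one at a time from the
left. To insert `y` in front of `x₁^{n₁} x₂^{n₂} ⋯ z^l`: if `y < x₁`, prepend `y¹`; if `y = x₁`,
raise `n₁`, and once it reaches `m` replace `x₁^m` by the central element `x₁^m = z^m` and move it
into the power of `z`; if `x₁ < y`, write `y x₁^{n₁} = x₁^{n₁} y'` with `y' ∈ X`, insert `y'` into
the strictly shorter tail, and then insert `x₁` back `n₁` times. The recursion terminates by
lexicographic induction on the length of the word and on the letter, `X` being finite.
-/

theorem Set.Finite.wellFoundedOn_of_irrefl_of_trans {α : Type*} {s : Set α} {r : α → α → Prop}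
    (hs : s.Finite) (hirrefl : ∀ a ∈ s, ¬ r a a)
    (htrans : ∀ a ∈ s, ∀ b ∈ s, ∀ c ∈ s, r a b → r b c → r a c) :
    s.WellFoundedOn r := by
  have := hs.to_subtype
  have : IsTrans s (Subrel r (· ∈ s)) := ⟨fun a b c => htrans a a.2 b b.2 c c.2⟩
  have : Std.Irrefl (Subrel r (· ∈ s)) := ⟨fun a => hirrefl a a.2⟩
  exact Finite.wellFounded_of_trans_of_irrefl _

theorem Subgroup.mem_center_of_closure_eq_top {G : Type*} [Group G] {s : Set G}
    (hs : closure s = ⊤) {g : G} (hg : ∀ h ∈ s, h * g = g * h) : g ∈ center G := by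
  rw [← centralizer_univ, ← coe_top, ← hs, centralizer_closure]
  exact mem_centralizer_iff.mpr hg

theorem pow_mul_of_forall_mul {M : Type*} [Monoid M] {P : ℕ → M → Prop} {a g : M} {t n : ℕ}
    (ha : ∀ j < n, ∀ g, P (t + j) g → P (t + j + 1) (a * g)) (hg : P t g) :
    P (t + n) (a ^ n * g) := by
  induction n with
  | zero => simpa using hg
  | succ n ih =>
    rw [pow_succ', mul_assoc, ← add_assoc]
    exact ha n n.lt_succ_self _ (ih fun j hj => ha j (hj.trans n.lt_succ_self))

namespace ConjClassNormalForm

variable {G : Type*} {X : Set G} {m : ℕ} {lt : G → G → Prop} {z : G}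

def powProd [Monoid G] (ps : List (G × ℕ)) : G := (ps.map fun p => p.1 ^ p.2).prod

def expSum (ps : List (G × ℕ)) : ℕ := (ps.map Prod.snd).sum

@[simp] lemma powProd_nil [Monoid G] : powProd ([] : List (G × ℕ)) = 1 := rfl

@[simp] lemma powProd_cons [Monoid G] (p : G × ℕ) (ps : List (G × ℕ)) :
    powProd (p :: ps) = p.1 ^ p.2 * powProd ps := rfl

@[simp] lemma expSum_nil : expSum ([] : List (G × ℕ)) = 0 := rfl

@[simp] lemma expSum_cons (p : G × ℕ) (ps : List (G × ℕ)) :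
    expSum (p :: ps) = p.2 + expSum ps := rfl

def IsNormal (X : Set G) (m : ℕ) (lt : G → G → Prop) (z : G) (ps : List (G × ℕ)) : Prop :=
  (∀ p ∈ ps, p.1 ∈ X ∧ lt p.1 z ∧ 1 ≤ p.2 ∧ p.2 ≤ m - 1) ∧ ps.Pairwise fun p q => lt p.1 q.1

def HasNormalForm [Monoid G] (X : Set G) (m : ℕ) (lt : G → G → Prop) (z : G) (t : ℕ) (g : G) :
    Prop :=
  ∃ ps l, IsNormal X m lt z ps ∧ expSum ps + l = t ∧ g = powProd ps * z ^ l

lemma IsNormal.nil : IsNormal X m lt z [] := ⟨by simp, List.Pairwise.nil⟩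

lemma IsNormal.of_cons {p : G × ℕ} {ps : List (G × ℕ)} (h : IsNormal X m lt z (p :: ps)) :
    IsNormal X m lt z ps :=
  ⟨fun q hq => h.1 q (List.mem_cons_of_mem _ hq), h.2.of_cons⟩

lemma IsNormal.cons_one {y : G} {ps : List (G × ℕ)} (h : IsNormal X m lt z ps) (hy : y ∈ X)
    (hyz : lt y z) (hm : 2 ≤ m) (hlt : ∀ p ∈ ps, lt y p.1) :
    IsNormal X m lt z ((y, 1) :: ps) := by
  refine ⟨fun p hp => ?_, List.pairwise_cons.mpr ⟨hlt, h.2⟩⟩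
  rcases List.mem_cons.mp hp with rfl | hp
  · exact ⟨hy, hyz, le_rfl, by omega⟩
  · exact h.1 p hp

lemma IsNormal.cons_succ {a : G} {n : ℕ} {ps : List (G × ℕ)} (h : IsNormal X m lt z ((a, n) :: ps))
    (hn : n + 1 ≤ m - 1) : IsNormal X m lt z ((a, n + 1) :: ps) := by
  obtain ⟨haX, haz, -, -⟩ := h.1 _ List.mem_cons_self
  refine ⟨fun p hp => ?_, List.pairwise_cons.mpr ⟨(List.pairwise_cons.mp h.2).1, h.2.of_cons⟩⟩
  rcases List.mem_cons.mp hp with rfl | hp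
  · exact ⟨haX, haz, by omega, hn⟩
  · exact h.1 p (List.mem_cons_of_mem _ hp)

lemma IsNormal.lt_of_lt_head {a y : G} {n : ℕ} {ps : List (G × ℕ)}
    (h : IsNormal X m lt z ((a, n) :: ps))
    (htrans : ∀ a ∈ X, ∀ b ∈ X, ∀ c ∈ X, lt a b → lt b c → lt a c) (hy : y ∈ X) (hya : lt y a) :
    ∀ p ∈ (a, n) :: ps, lt y p.1 := by
  intro p hp
  rcases List.mem_cons.mp hp with rfl | hp
  · exact hya
  · exact htrans y hy a (h.1 _ List.mem_cons_self).1 p.1 (h.1 p (List.mem_cons_of_mem _ hp)).1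
      hya ((List.pairwise_cons.mp h.2).1 p hp)

lemma hasNormalForm_z_pow [Monoid G] (l : ℕ) : HasNormalForm X m lt z l (z ^ l) :=
  ⟨[], l, IsNormal.nil, by simp, by simp⟩

theorem HasNormalForm.exists_ofFn [Monoid G] {t : ℕ} {g : G} (h : HasNormalForm X m lt z t g) :
    ∃ (k l : ℕ) (x : Fin k → G) (e : Fin k → ℕ),
      (∀ i, x i ∈ X) ∧ (∀ i j : Fin k, i < j → lt (x i) (x j)) ∧ (∀ i, lt (x i) z) ∧
      (∀ i, 1 ≤ e i ∧ e i ≤ m - 1) ∧ (∑ i, e i) + l = t ∧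
      g = (List.ofFn fun i => x i ^ e i).prod * z ^ l := by
  obtain ⟨ps, l, ⟨hmem, hsorted⟩, rfl, rfl⟩ := h
  refine ⟨ps.length, l, fun i => ps[(i : ℕ)].1, fun i => ps[(i : ℕ)].2,
    fun i => (hmem _ (ps.get_mem i)).1, fun i j hij => List.pairwise_iff_get.mp hsorted i j hij,
    fun i => (hmem _ (ps.get_mem i)).2.1, fun i => (hmem _ (ps.get_mem i)).2.2, ?_,
    by rw [powProd, ← List.ofFn_getElem_eq_map]⟩
  rw [← List.sum_ofFn, expSum, ← List.ofFn_getElem_eq_map]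

theorem hasNormalForm_mul [Group G] (hX : ∀ a ∈ X, ∀ g : G, g * a * g⁻¹ ∈ X)
    (hpow : ∀ a ∈ X, a ^ m = z ^ m) (hzm_center : z ^ m ∈ Subgroup.center G)
    (hm_two : ∀ a ∈ X, ∀ b ∈ X, a ≠ b → 2 ≤ m) (hwf : X.WellFoundedOn lt)
    (htrans : ∀ a ∈ X, ∀ b ∈ X, ∀ c ∈ X, lt a b → lt b c → lt a c)
    (htotal : ∀ a ∈ X, ∀ b ∈ X, a ≠ b → lt a b ∨ lt b a)
    (hz : z ∈ X) (hz_max : ∀ a ∈ X, a ≠ z → lt a z) (t : ℕ) :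
    ∀ y ∈ X, ∀ g, HasNormalForm X m lt z t g → HasNormalForm X m lt z (t + 1) (y * g) := by
  induction t using Nat.strong_induction_on with | _ t IHt => ?_
  refine fun y hy => hwf.induction hy (P := fun y => ∀ g, HasNormalForm X m lt z t g →
    HasNormalForm X m lt z (t + 1) (y * g)) fun y hy IHy => ?_
  rintro _ ⟨ps, l, hps, rfl, rfl⟩
  rcases ps with _ | ⟨⟨a, n⟩, ps⟩
  · by_cases hyz : y = z
    · subst hyz
      simpa [← pow_succ'] using hasNormalForm_z_pow (X := X) (m := m) (lt := lt) (l + 1)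
    · exact ⟨[(y, 1)], l, IsNormal.nil.cons_one hy (hz_max y hy hyz) (hm_two y hy z hz hyz)
        (by simp), by simp; omega, by simp⟩
  obtain ⟨ha, haz, hn_pos, hn_le⟩ := hps.1 _ List.mem_cons_self
  rcases eq_or_ne y a with rfl | hya
  · rcases Nat.lt_or_ge (n + 1) m with hlt | hge
    · exact ⟨(y, n + 1) :: ps, l, hps.cons_succ (by omega), by simp; omega,
        by simp [pow_succ', mul_assoc]⟩
    · have hn_eq : n + 1 = m := by omega
      refine ⟨ps, m + l, hps.of_cons, by simp; omega, ?_⟩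
      calc y * (powProd ((y, n) :: ps) * z ^ l) = y ^ m * (powProd ps * z ^ l) := by
            simp [← hn_eq, pow_succ', mul_assoc]
        _ = z ^ m * (powProd ps * z ^ l) := by rw [hpow y hy]
        _ = powProd ps * z ^ (m + l) := by
            rw [← mul_assoc, ← Subgroup.mem_center_iff.mp hzm_center, mul_assoc, pow_add]
  rcases htotal y hy a ha hya with hlt | hgt
  · exact ⟨(y, 1) :: (a, n) :: ps, l, hps.cons_one hy (htrans y hy a ha z hz hlt haz)
      (hm_two y hy a ha hya) (hps.lt_of_lt_head htrans hy hlt), by simp; omega, by simp [mul_assoc]⟩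
  · set y' := (a ^ n)⁻¹ * y * a ^ n
    have hy' : y' ∈ X := by simpa using hX y hy (a ^ n)⁻¹
    have htail := IHt (expSum ps + l) (by simp; omega) y' hy' _ ⟨ps, l, hps.of_cons, rfl, rfl⟩
    have hreinsert := pow_mul_of_forall_mul (n := n) (a := a) (fun j hj g hg => ?_) htail
    · convert hreinsert using 1
      · simp; omega
      · simp [y']; group
    · -- only the last reinsertion of `a` reaches length `t`, where `a < y` lets the inner
      -- induction apply
      rcases (by omega : expSum ps + l + 1 + j < n + expSum ps + l ∨
        expSum ps + l + 1 + j = n + expSum ps + l) with hlt | heq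
      · exact IHt _ (by simp; omega) a ha g hg
      · rw [heq] at hg ⊢
        exact IHy a ha hgt g (by simpa using hg)

end ConjClassNormalForm

open ConjClassNormalForm in
theorem stmt0_general {G : Type*} [Group G] (X : Set G)
    (hXconj : ∃ x : G, X = {y | IsConj x y})
    (hXfin : X.Finite)
    (hXgen : Subgroup.closure X = ⊤)
    (m : ℕ) (hm_pos : 0 < m)
    (hm : ∀ x ∈ X, ∀ y ∈ X, x ^ m * y = y * x ^ m)
    (lt : G → G → Prop)
    (hlt_irrefl : ∀ a ∈ X, ¬ lt a a)
    (hlt_trans : ∀ a ∈ X, ∀ b ∈ X, ∀ c ∈ X, lt a b → lt b c → lt a c)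
    (hlt_total : ∀ a ∈ X, ∀ b ∈ X, a ≠ b → lt a b ∨ lt b a)
    (z : G) (hz : z ∈ X) (hz_max : ∀ a ∈ X, a ≠ z → lt a z) :
    ∀ (n : ℕ) (w : List G), w.length = n → (∀ a ∈ w, a ∈ X) →
      ∃ (k l : ℕ) (x : Fin k → G) (e : Fin k → ℕ),
        (∀ i, x i ∈ X) ∧
        (∀ i j : Fin k, i < j → lt (x i) (x j)) ∧
        (∀ i, lt (x i) z) ∧
        (∀ i, 1 ≤ e i ∧ e i ≤ m - 1) ∧
        (∑ i, e i) + l = n ∧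
        w.prod = (List.ofFn fun i => x i ^ e i).prod * z ^ l := by
  rintro n w rfl hw
  obtain ⟨x, rfl⟩ := hXconj
  have hzm_center : z ^ m ∈ Subgroup.center G :=
    Subgroup.mem_center_of_closure_eq_top hXgen fun y hy => (hm z hz y hy).symm
  have hpow : ∀ a ∈ {y | IsConj x y}, a ^ m = z ^ m := fun a ha =>
    ((ha.symm.trans hz).pow m).eq_of_right_mem_center hzm_center
  have hm_two : ∀ a ∈ {y | IsConj x y}, ∀ b ∈ {y | IsConj x y}, a ≠ b → 2 ≤ m := by
    intro a ha b hb hab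
    by_contra hm_lt
    obtain rfl : m = 1 := by omega
    have hzc : z ∈ Set.center G := pow_one z ▸ hzm_center
    exact hab (((ha.symm.trans hz).eq_of_right_mem_center hzc).trans
      ((hb.symm.trans hz).eq_of_right_mem_center hzc).symm)
  have hins := hasNormalForm_mul (fun a ha g => ha.trans (isConj_iff.mpr ⟨g, rfl⟩)) hpow
    hzm_center hm_two (hXfin.wellFoundedOn_of_irrefl_of_trans hlt_irrefl hlt_trans)
    hlt_trans hlt_total hz hz_max
  refine HasNormalForm.exists_ofFn ?_
  induction w with
  | nil => simpa using hasNormalForm_z_pow 0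
  | cons y w ih =>
    simpa using hins _ y (hw y List.mem_cons_self) _
      (ih fun a ha => hw a (List.mem_cons_of_mem _ ha))

/-- Let `G` be a group generated by a finite conjugacy class `X`, let `m` be the
order of the conjugation action of any `x ∈ X` on `X`, let `lt` be a (strict) total order on `X`,
and let `z` be the maximal element of `(X, lt)`. Then for every `n ≥ 0`, every product of `n`
elements of `X` can be written as `x₁^{n₁} ⋯ x_k^{n_k} z^l` with `n₁ + ⋯ + n_k + l = n`,
`x₁ < x₂ < ⋯ < x_k < z` in `X`, and `1 ≤ nᵢ ≤ m - 1` for all `i`. -/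
theorem stmt0 {G : Type*} [Group G] (X : Set G)
    (hXconj : ∃ x : G, X = {y | IsConj x y})
    (hXfin : X.Finite)
    (hXgen : Subgroup.closure X = ⊤)
    (m : ℕ) (hm_pos : 0 < m)
    (hm : ∀ x ∈ X, ∀ y ∈ X, x ^ m * y = y * x ^ m)
    (hm_min : ∀ x ∈ X, ∀ m' : ℕ, 0 < m' → (∀ y ∈ X, x ^ m' * y = y * x ^ m') → m ≤ m')
    (lt : G → G → Prop)
    (hlt_irrefl : ∀ a ∈ X, ¬ lt a a)
    (hlt_trans : ∀ a ∈ X, ∀ b ∈ X, ∀ c ∈ X, lt a b → lt b c → lt a c)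
    (hlt_total : ∀ a ∈ X, ∀ b ∈ X, a ≠ b → lt a b ∨ lt b a)
    (z : G) (hz : z ∈ X) (hz_max : ∀ a ∈ X, a ≠ z → lt a z) :
    ∀ (n : ℕ) (w : List G), w.length = n → (∀ a ∈ w, a ∈ X) →
      ∃ (k l : ℕ) (x : Fin k → G) (e : Fin k → ℕ),
        (∀ i, x i ∈ X) ∧
        (∀ i j : Fin k, i < j → lt (x i) (x j)) ∧
        (∀ i, lt (x i) z) ∧
        (∀ i, 1 ≤ e i ∧ e i ≤ m - 1) ∧
        (∑ i, e i) + l = n ∧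
        w.prod = (List.ofFn fun i => x i ^ e i).prod * z ^ l :=
  stmt0_general X hXconj hXfin hXgen m hm_pos hm lt hlt_irrefl hlt_trans hlt_total z hz hz_max
end

section
/- Let G be a group generated by a finite conjugacy class X. Then the derived subgroup [G,G] of G is finite, and [G,G] is generated by the set { x y⁻¹ : x, y ∈ X }. -/
/-!
Each `x ∈ X` has only finitely many conjugates, so its centralizer has finite index; as `X` is
finite and generates `G`, the center `Z(G) = ⋂ₓ C(x)` has finite index too. A commutator `⁅a, b⁆`
depends only on the cosets `aZ(G)`, `bZ(G)`, so there are finitely many commutators, and by Schur's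
theorem `[G,G]` is finite.

For the generators: if `y = c x c⁻¹` then `x y⁻¹ = ⁅x, c⁆`, so `H = ⟨x y⁻¹ | x, y ∈ X⟩ ≤ [G,G]`.
Conversely `H` is normal and, for a fixed `x₀ ∈ X`, every `x ∈ X` lies in `H x₀`, so
`G = H ⟨x₀⟩` with `⟨x₀⟩` abelian, which forces `[G,G] ≤ H`.
-/

open Subgroup
open scoped commutatorElement

namespace Subgroup

variable {G : Type*} [Group G]

theorem finiteIndex_centralizer_of_finite_conj {g : G} (hg : {h | IsConj g h}.Finite) :
    (centralizer {g}).FiniteIndex := by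
  have horbit : MulAction.orbit (ConjAct G) g = {h | IsConj g h} := by
    ext h; exact ConjAct.mem_orbit_conjAct.trans isConj_comm
  have hindex : (centralizer {g}).index = (MulAction.stabilizer (ConjAct G) g).index := by
    rw [ConjAct.stabilizer_eq_centralizer]; rfl
  refine ⟨?_⟩
  rw [hindex, MulAction.index_stabilizer, horbit]
  exact (Set.ncard_pos hg).mpr ⟨g, IsConj.refl g⟩ |>.ne'

theorem finiteIndex_center_of_closure_eq_top {S : Set G} (hS : closure S = ⊤) (hSfin : S.Finite)
    (hconj : ∀ s ∈ S, {t | IsConj s t}.Finite) : (center G).FiniteIndex := by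
  have := hSfin.to_subtype
  rw [center_eq_infi' hS]
  exact finiteIndex_iInf fun s => finiteIndex_centralizer_of_finite_conj (hconj s s.2)

theorem commutatorElement_mul_mul_of_mem_center {z w : G} (hz : z ∈ center G)
    (hw : w ∈ center G) (a b : G) : ⁅a * z, b * w⁆ = ⁅a, b⁆ := by
  have hz' (g : G) : z * g * z⁻¹ = g := by rw [← mem_center_iff.mp hz, mul_inv_cancel_right]
  have hw' (g : G) : w * g * w⁻¹ = g := by rw [← mem_center_iff.mp hw, mul_inv_cancel_right]
  calc ⁅a * z, b * w⁆ = a * (z * (b * w) * z⁻¹) * a⁻¹ * w⁻¹ * b⁻¹ := by group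
    _ = a * b * (w * a⁻¹ * w⁻¹) * b⁻¹ := by rw [hz']; group
    _ = ⁅a, b⁆ := by rw [hw', commutatorElement_def]

theorem finite_commutatorSet_of_finiteIndex_center [(center G).FiniteIndex] :
    (commutatorSet G).Finite := by
  refine (Set.finite_range fun p : (G ⧸ center G) × (G ⧸ center G) => ⁅p.1.out, p.2.out⁆).subset ?_
  rintro _ ⟨a, b, rfl⟩
  obtain ⟨z, hz⟩ := QuotientGroup.mk_out_eq_mul (center G) a
  obtain ⟨w, hw⟩ := QuotientGroup.mk_out_eq_mul (center G) b
  exact ⟨(a, b), by simp only [hz, hw, commutatorElement_mul_mul_of_mem_center z.2 w.2]⟩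

theorem mul_inv_mem_commutatorSet_of_isConj {x y : G} (h : IsConj x y) :
    x * y⁻¹ ∈ commutatorSet G := by
  obtain ⟨c, rfl⟩ := isConj_iff.mp h
  exact ⟨x, c, by group⟩

theorem closure_normal_of_conj_mem {s : Set G} (hs : ∀ g, ∀ x ∈ s, g * x * g⁻¹ ∈ s) :
    (closure s).Normal := by
  rw [← normalizer_eq_top_iff, eq_top_iff, le_normalizer_closure_iff]
  exact fun g _ x hx => subset_closure (hs g x hx)

theorem commutator_eq_closure_mul_inv_of_closure_conj_eq_top {x₀ : G}
    (hgen : closure {y | IsConj x₀ y} = ⊤) :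
    _root_.commutator G =
      closure {g | ∃ x ∈ {y | IsConj x₀ y}, ∃ y ∈ {y | IsConj x₀ y}, g = x * y⁻¹} := by
  set C := {y | IsConj x₀ y}
  set H := closure {g | ∃ x ∈ C, ∃ y ∈ C, g = x * y⁻¹}
  have hC (g : G) {x : G} (hx : x ∈ C) : g * x * g⁻¹ ∈ C := hx.trans (isConj_iff.mpr ⟨g, rfl⟩)
  have : H.Normal := closure_normal_of_conj_mem <| by
    rintro g _ ⟨x, hx, y, hy, rfl⟩
    exact ⟨_, hC g hx, _, hC g hy, by group⟩
  refine le_antisymm ?_ ?_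
  · refine Normal.commutator_le_of_self_sup_commutative_eq_top (H := zpowers x₀) ?_ inferInstance
    rw [eq_top_iff, ← hgen, closure_le]
    intro y hy
    have hyx₀ : y * x₀⁻¹ ∈ H := subset_closure ⟨y, hy, x₀, IsConj.refl x₀, rfl⟩
    simpa using mul_mem_sup hyx₀ (mem_zpowers x₀)
  · rw [_root_.commutator_eq_closure]
    refine closure_mono ?_
    rintro _ ⟨x, hx, y, hy, rfl⟩
    exact mul_inv_mem_commutatorSet_of_isConj (hx.symm.trans hy)

end Subgroup

/-- Let `G` be a group generated by a finite conjugacy class `X`. Then the derived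
subgroup `[G,G]` of `G` is finite, and `[G,G]` is generated by the set `{x y⁻¹ : x, y ∈ X}`. -/
theorem stmt2 {G : Type*} [Group G] (X : Set G)
    (hXconj : ∃ x : G, X = {y | IsConj x y})
    (hXfin : X.Finite)
    (hXgen : Subgroup.closure X = ⊤) :
    (commutator G : Set G).Finite ∧
    commutator G = Subgroup.closure {g : G | ∃ x ∈ X, ∃ y ∈ X, g = x * y⁻¹} := by
  obtain ⟨x₀, rfl⟩ := hXconj
  have hconj : ∀ s ∈ {y | IsConj x₀ y}, {t | IsConj s t}.Finite := fun s hs =>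
    hXfin.subset fun t hst => hs.trans hst
  have : (center G).FiniteIndex := finiteIndex_center_of_closure_eq_top hXgen hXfin hconj
  have : Finite (commutatorSet G) := finite_commutatorSet_of_finiteIndex_center.to_subtype
  -- Schur's theorem is the instance `Finite (commutatorSet G) → Finite (commutator G)`
  exact ⟨Set.finite_coe_iff.mp (inferInstanceAs (Finite (commutator G))),
    commutator_eq_closure_mul_inv_of_closure_conj_eq_top hXgen⟩
end

section
/- Let G be a group generated by a finite conjugacy class X. Then the derived subgroup of G admits the description [G,G] = { x₁ x₂ ⋯ x_n (y₁ y₂ ⋯ y_n)⁻¹ : n ≥ 0, x₁, …, x_n, y₁, …, y_n ∈ X }. -/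
/-!
Let `S` be the set of balanced quotients `x₁ ⋯ xₙ (y₁ ⋯ yₙ)⁻¹`. As `X` is closed under
conjugation, `S` is a normal subgroup of `G`. Any normal subgroup `N` such that `X` lies in a single
coset `x₀N` satisfies `[G,G] ≤ N` (since `G ⧸ N` is generated by the image of `x₀`, hence cyclic)
and `S ⊆ N` (since a product of `n` elements of `X` maps to `x₀ⁿ`). Both `N = S` and `N = [G,G]`
qualify, because all elements of `X` are conjugate.
-/

section

variable {G : Type*} [Group G]

def balancedQuotients (X : Set G) : Set G :=
  {g | ∃ xs ys : List G, xs.length = ys.length ∧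
    (∀ a ∈ xs, a ∈ X) ∧ (∀ a ∈ ys, a ∈ X) ∧ g = xs.prod * ys.prod⁻¹}

variable {X : Set G}

theorem one_mem_balancedQuotients : (1 : G) ∈ balancedQuotients X :=
  ⟨[], [], rfl, by simp, by simp, by simp⟩

theorem mul_inv_mem_balancedQuotients {x y : G} (hx : x ∈ X) (hy : y ∈ X) :
    x * y⁻¹ ∈ balancedQuotients X :=
  ⟨[x], [y], rfl, by simpa using hx, by simpa using hy, by simp⟩

theorem inv_mem_balancedQuotients {g : G} (hg : g ∈ balancedQuotients X) :
    g⁻¹ ∈ balancedQuotients X := by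
  obtain ⟨xs, ys, hlen, hxs, hys, rfl⟩ := hg
  exact ⟨ys, xs, hlen.symm, hys, hxs, by group⟩

theorem conj_mem_balancedQuotients (hX : ∀ c : G, ∀ x ∈ X, MulAut.conj c x ∈ X) (c : G)
    {g : G} (hg : g ∈ balancedQuotients X) : MulAut.conj c g ∈ balancedQuotients X := by
  obtain ⟨xs, ys, hlen, hxs, hys, rfl⟩ := hg
  refine ⟨xs.map (MulAut.conj c), ys.map (MulAut.conj c), by simp [hlen], ?_, ?_, ?_⟩
  · exact List.forall_mem_map.2 fun x hx ↦ hX c x (hxs x hx)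
  · exact List.forall_mem_map.2 fun y hy ↦ hX c y (hys y hy)
  · rw [← map_list_prod, ← map_list_prod, map_mul, map_inv]

-- `P Q⁻¹ · P' Q'⁻¹ = (P · Q⁻¹ P' Q) (Q' Q)⁻¹`, and `Q⁻¹ P' Q` is again a product of elements of `X`.
theorem mul_mem_balancedQuotients (hX : ∀ c : G, ∀ x ∈ X, MulAut.conj c x ∈ X) {g h : G}
    (hg : g ∈ balancedQuotients X) (hh : h ∈ balancedQuotients X) :
    g * h ∈ balancedQuotients X := by
  obtain ⟨xs, ys, hlen, hxs, hys, rfl⟩ := hg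
  obtain ⟨xs', ys', hlen', hxs', hys', rfl⟩ := hh
  refine ⟨xs ++ xs'.map (MulAut.conj ys.prod⁻¹), ys' ++ ys, by simp [hlen, hlen', add_comm],
    ?_, ?_, ?_⟩
  · exact List.forall_mem_append.2 ⟨hxs, List.forall_mem_map.2 fun x hx ↦ hX _ x (hxs' x hx)⟩
  · exact List.forall_mem_append.2 ⟨hys', hys⟩
  · rw [List.prod_append, List.prod_append, ← map_list_prod, MulAut.conj_apply]
    group

def balancedSubgroup (X : Set G) (hX : ∀ c : G, ∀ x ∈ X, MulAut.conj c x ∈ X) : Subgroup G where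
  carrier := balancedQuotients X
  one_mem' := one_mem_balancedQuotients
  mul_mem' := mul_mem_balancedQuotients hX
  inv_mem' := inv_mem_balancedQuotients

theorem balancedSubgroup_normal (hX : ∀ c : G, ∀ x ∈ X, MulAut.conj c x ∈ X) :
    (balancedSubgroup X hX).Normal :=
  ⟨fun _ hg c ↦ conj_mem_balancedQuotients hX c hg⟩

theorem balancedQuotients_subset_of_forall_mk_eq {N : Subgroup G} [N.Normal] {x₀ : G}
    (hX : ∀ x ∈ X, (x : G ⧸ N) = x₀) : balancedQuotients X ⊆ N := by
  rintro _ ⟨xs, ys, hlen, hxs, hys, rfl⟩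
  have mk_prod {l : List G} (hl : ∀ a ∈ l, a ∈ X) :
      ((l.prod : G) : G ⧸ N) = (x₀ : G ⧸ N) ^ l.length := by
    rw [← QuotientGroup.mk'_apply, map_list_prod, List.prod_eq_pow_card _ (x₀ : G ⧸ N),
      List.length_map]
    simpa using fun a ha ↦ hX a (hl a ha)
  rw [SetLike.mem_coe, ← QuotientGroup.eq_one_iff, QuotientGroup.mk_mul, QuotientGroup.mk_inv,
    mk_prod hxs, mk_prod hys, hlen, mul_inv_cancel]

theorem commutator_le_of_forall_mk_eq {N : Subgroup G} [N.Normal] {x₀ : G}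
    (hgen : Subgroup.closure X = ⊤) (hX : ∀ x ∈ X, (x : G ⧸ N) = x₀) : commutator G ≤ N := by
  have : IsCyclic (G ⧸ N) := by
    refine isCyclic_iff_exists_zpowers_eq_top.2 ⟨x₀, eq_top_iff.2 ?_⟩
    rw [← Subgroup.map_top_of_surjective _ (QuotientGroup.mk'_surjective N), ← hgen,
      MonoidHom.map_closure, Subgroup.closure_le, Set.image_subset_iff]
    intro x hx
    rw [Set.mem_preimage, QuotientGroup.mk'_apply, hX x hx]
    exact Subgroup.mem_zpowers _
  let := IsCyclic.commGroup (α := G ⧸ N)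
  simpa using Abelianization.commutator_subset_ker (QuotientGroup.mk' N)

theorem QuotientGroup.mk_commutator_eq_of_isConj {x₀ x : G} (h : IsConj x₀ x) :
    (x : G ⧸ commutator G) = x₀ := by
  obtain ⟨c, rfl⟩ := isConj_iff.1 h
  rw [QuotientGroup.eq_iff_div_mem, div_eq_mul_inv]
  exact Subgroup.commutator_mem_commutator (Subgroup.mem_top c) (Subgroup.mem_top x₀)

end

theorem stmt4_general {G : Type*} [Group G] (X : Set G)
    (hXconj : ∃ x : G, X = {y | IsConj x y})
    (hXgen : Subgroup.closure X = ⊤) :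
    (commutator G : Set G) =
      {g : G | ∃ xs ys : List G, xs.length = ys.length ∧
        (∀ a ∈ xs, a ∈ X) ∧ (∀ a ∈ ys, a ∈ X) ∧ g = xs.prod * ys.prod⁻¹} := by
  obtain ⟨x₀, rfl⟩ := hXconj
  have hconj : ∀ c : G, ∀ x ∈ {y | IsConj x₀ y}, MulAut.conj c x ∈ {y | IsConj x₀ y} :=
    fun c x hx ↦ hx.trans (isConj_iff.2 ⟨c, rfl⟩)
  have := balancedSubgroup_normal hconj
  refine subset_antisymm ?_ (balancedQuotients_subset_of_forall_mk_eq
    fun x hx ↦ QuotientGroup.mk_commutator_eq_of_isConj hx)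
  refine commutator_le_of_forall_mk_eq (N := balancedSubgroup _ hconj) (x₀ := x₀) hXgen fun x hx ↦ ?_
  rw [QuotientGroup.eq_iff_div_mem, div_eq_mul_inv]
  exact mul_inv_mem_balancedQuotients hx (IsConj.refl x₀)

/-- Let `G` be a group generated by a finite conjugacy class `X`. Then
`[G,G] = { x₁ ⋯ x_n (y₁ ⋯ y_n)⁻¹ : n ≥ 0, xᵢ, yᵢ ∈ X }`. -/
theorem stmt4 {G : Type*} [Group G] (X : Set G)
    (hXconj : ∃ x : G, X = {y | IsConj x y})
    (hXfin : X.Finite)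
    (hXgen : Subgroup.closure X = ⊤) :
    (commutator G : Set G) =
      {g : G | ∃ xs ys : List G, xs.length = ys.length ∧
        (∀ a ∈ xs, a ∈ X) ∧ (∀ a ∈ ys, a ∈ X) ∧ g = xs.prod * ys.prod⁻¹} :=
  stmt4_general X hXconj hXgen
end

section
/- Let p be a prime, α ∈ ℤ/pℤ \ {0,1}, G a group, X a conjugacy class of G generating G, and φ : ℤ/pℤ → X a bijection satisfying φ(i)φ(j)φ(i)⁻¹ = φ((1−α)i + αj) for all i, j ∈ ℤ/pℤ. Set g_i = φ(i) for i ∈ ℤ/pℤ and γ = g₀g₁⁻¹. Then the following relations hold in G: (i) g_x g_y⁻¹ = g_{x+z} g_{y+z}⁻¹ for all x, y, z ∈ ℤ/pℤ; (ii) g₀ g_{k mod p}⁻¹ = γ^k for every integer k ≥ 0; (iii) g_x γ = γ^α g_x for all x ∈ ℤ/pℤ (where γ^α means γ raised to any integer representative of α). -/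
/-!
Conjugating by `φ x * (φ y)⁻¹` translates every index by `t = (1 - α) * (x - y)`, so the
quotients `φ (x + z) * (φ (y + z))⁻¹` are periodic in `z` with period `t`. For `x ≠ y` this
period is nonzero, hence generates `ℤ/pℤ`, which gives (i). Then (ii) telescopes, and (iii)
follows from the rack relation, which sends `γ = φ 0 * (φ 1)⁻¹` under conjugation by `φ x` to
`φ (α * 0) * (φ (α * 1))⁻¹ = γ ^ α` after a translation.
-/

theorem Function.Periodic.apply_eq_apply_zero_of_isUnit {n : ℕ} [NeZero n] {β : Type*}
    {f : ZMod n → β} {t : ZMod n} (hf : Function.Periodic f t) (ht : IsUnit t) (z : ZMod n) :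
    f z = f 0 := by
  have hz : (z * ↑ht.unit⁻¹).val • t = z := by
    rw [nsmul_eq_mul, ZMod.natCast_zmod_val, mul_assoc, ht.val_inv_mul, mul_one]
  simpa [hz] using hf.nsmul (z * ↑ht.unit⁻¹).val 0

section AffineRack

variable {G : Type*} [Group G]

section Field

variable {F : Type*} [Field F] {α : F} {φ : F → G}

theorem inv_mul_mul_eq_of_rack (hrack : ∀ i j, φ i * φ j * (φ i)⁻¹ = φ ((1 - α) * i + α * j))
    (hα : α ≠ 0) (i w : F) : (φ i)⁻¹ * φ w * φ i = φ (α⁻¹ * (w - (1 - α) * i)) := by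
  have h := hrack i (α⁻¹ * (w - (1 - α) * i))
  rw [show (1 - α) * i + α * (α⁻¹ * (w - (1 - α) * i)) = w by field_simp; ring] at h
  rw [← h]
  group

theorem conj_mul_inv_eq_of_rack (hrack : ∀ i j, φ i * φ j * (φ i)⁻¹ = φ ((1 - α) * i + α * j))
    (hα : α ≠ 0) (x y w : F) :
    φ x * (φ y)⁻¹ * φ w * (φ x * (φ y)⁻¹)⁻¹ = φ (w + (1 - α) * (x - y)) :=
  calc φ x * (φ y)⁻¹ * φ w * (φ x * (φ y)⁻¹)⁻¹
      = φ x * ((φ y)⁻¹ * φ w * φ y) * (φ x)⁻¹ := by group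
    _ = φ ((1 - α) * x + α * (α⁻¹ * (w - (1 - α) * y))) := by
      rw [inv_mul_mul_eq_of_rack hrack hα, hrack]
    _ = φ (w + (1 - α) * (x - y)) := by
      congr 1
      field_simp
      ring

theorem periodic_mul_inv_of_rack
    (hrack : ∀ i j, φ i * φ j * (φ i)⁻¹ = φ ((1 - α) * i + α * j)) (hα : α ≠ 0) (x y : F) :
    Function.Periodic (fun z ↦ φ (x + z) * (φ (y + z))⁻¹) ((1 - α) * (x - y)) := by
  intro z
  have hconj := conj_mul_inv_eq_of_rack hrack hα (x + z) (y + z)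
  rw [show x + z - (y + z) = x - y by ring] at hconj
  set g := φ (x + z) * (φ (y + z))⁻¹
  calc φ (x + (z + (1 - α) * (x - y))) * (φ (y + (z + (1 - α) * (x - y))))⁻¹
      = g * φ (x + z) * g⁻¹ * (g * φ (y + z) * g⁻¹)⁻¹ := by
        rw [hconj, hconj, add_assoc, add_assoc]
    _ = g := by simp [g, mul_assoc]

end Field

theorem mul_inv_natCast_eq_pow {R : Type*} [AddCommMonoidWithOne R] {φ : R → G}
    (htrans : ∀ x y z, φ x * (φ y)⁻¹ = φ (x + z) * (φ (y + z))⁻¹) (k : ℕ) :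
    φ 0 * (φ k)⁻¹ = (φ 0 * (φ 1)⁻¹) ^ k := by
  induction k with
  | zero => simp
  | succ k ih =>
    calc φ 0 * (φ ↑(k + 1))⁻¹ = φ 0 * (φ k)⁻¹ * (φ (0 + k) * (φ (1 + k))⁻¹) := by
          rw [zero_add, add_comm 1, Nat.cast_succ]
          group
      _ = (φ 0 * (φ 1)⁻¹) ^ (k + 1) := by rw [ih, ← htrans, pow_succ]

theorem conj_mul_inv_of_rack {R : Type*} [CommRing R] {α : R} {φ : R → G}
    (hrack : ∀ i j, φ i * φ j * (φ i)⁻¹ = φ ((1 - α) * i + α * j))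
    (htrans : ∀ x y z, φ x * (φ y)⁻¹ = φ (x + z) * (φ (y + z))⁻¹) (x a b : R) :
    φ x * (φ a * (φ b)⁻¹) * (φ x)⁻¹ = φ (α * a) * (φ (α * b))⁻¹ :=
  calc φ x * (φ a * (φ b)⁻¹) * (φ x)⁻¹ = φ x * φ a * (φ x)⁻¹ * (φ x * φ b * (φ x)⁻¹)⁻¹ := by
        group
    _ = φ (α * a) * (φ (α * b))⁻¹ := by
        rw [hrack, hrack, htrans _ _ (-((1 - α) * x)), add_neg_cancel_comm, add_neg_cancel_comm]

end AffineRack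

theorem stmt5_general {G : Type*} [Group G] (p : ℕ) (hp : p.Prime)
    (α : ZMod p) (hα0 : α ≠ 0) (hα1 : α ≠ 1)
    (φ : ZMod p → G)
    (hrack : ∀ i j : ZMod p, φ i * φ j * (φ i)⁻¹ = φ ((1 - α) * i + α * j)) :
    (∀ x y z : ZMod p, φ x * (φ y)⁻¹ = φ (x + z) * (φ (y + z))⁻¹) ∧
    (∀ k : ℕ, φ 0 * (φ (k : ZMod p))⁻¹ = (φ 0 * (φ 1)⁻¹) ^ k) ∧
    (∀ x : ZMod p, φ x * (φ 0 * (φ 1)⁻¹) = (φ 0 * (φ 1)⁻¹) ^ α.val * φ x) := by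
  have : Fact p.Prime := ⟨hp⟩
  have htrans (x y z : ZMod p) : φ x * (φ y)⁻¹ = φ (x + z) * (φ (y + z))⁻¹ := by
    rcases eq_or_ne x y with rfl | hxy
    · simp
    have ht : (1 - α) * (x - y) ≠ 0 := mul_ne_zero (sub_ne_zero.2 hα1.symm) (sub_ne_zero.2 hxy)
    simpa using ((periodic_mul_inv_of_rack hrack hα0 x y).apply_eq_apply_zero_of_isUnit
      ht.isUnit z).symm
  refine ⟨htrans, mul_inv_natCast_eq_pow htrans, fun x ↦ ?_⟩
  calc φ x * (φ 0 * (φ 1)⁻¹) = φ x * (φ 0 * (φ 1)⁻¹) * (φ x)⁻¹ * φ x := by group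
    _ = φ 0 * (φ α)⁻¹ * φ x := by rw [conj_mul_inv_of_rack hrack htrans, mul_zero, mul_one]
    _ = (φ 0 * (φ 1)⁻¹) ^ α.val * φ x := by
      rw [← mul_inv_natCast_eq_pow htrans, ZMod.natCast_zmod_val]

/-- Let `p` be a prime, `α ∈ ℤ/pℤ \ {0,1}`, `G` a group, `X` a conjugacy class of
`G` generating `G`, and `φ : ℤ/pℤ → X` a bijection with `φ(i)φ(j)φ(i)⁻¹ = φ((1−α)i + αj)`.
With `gᵢ = φ(i)` and `γ = g₀g₁⁻¹`: (i) `g_x g_y⁻¹ = g_{x+z} g_{y+z}⁻¹`;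
(ii) `g₀ g_{k mod p}⁻¹ = γ^k` for every natural number `k`;
(iii) `g_x γ = γ^α g_x` (with `γ^α` meaning `γ` raised to an integer representative of `α`). -/
theorem stmt5 {G : Type*} [Group G] (p : ℕ) (hp : p.Prime)
    (α : ZMod p) (hα0 : α ≠ 0) (hα1 : α ≠ 1)
    (φ : ZMod p → G) (hφinj : Function.Injective φ)
    (hXconj : ∃ x : G, Set.range φ = {y | IsConj x y})
    (hXgen : Subgroup.closure (Set.range φ) = ⊤)
    (hrack : ∀ i j : ZMod p, φ i * φ j * (φ i)⁻¹ = φ ((1 - α) * i + α * j)) :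
    (∀ x y z : ZMod p, φ x * (φ y)⁻¹ = φ (x + z) * (φ (y + z))⁻¹) ∧
    (∀ k : ℕ, φ 0 * (φ (k : ZMod p))⁻¹ = (φ 0 * (φ 1)⁻¹) ^ k) ∧
    (∀ x : ZMod p, φ x * (φ 0 * (φ 1)⁻¹) = (φ 0 * (φ 1)⁻¹) ^ α.val * φ x) :=
  stmt5_general p hp α hα0 hα1 φ hrack
end

section
/- Let p be a prime, α ∈ ℤ/pℤ \ {0,1}, G a group, X a conjugacy class of G generating G, and φ : ℤ/pℤ → X a bijection satisfying φ(i)φ(j)φ(i)⁻¹ = φ((1−α)i + αj) for all i, j ∈ ℤ/pℤ. Set γ = φ(0)φ(1)⁻¹. Then the derived subgroup [G,G] is cyclic of order p and is generated by γ; in particular γ has order p in G. -/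
/-!
The displacements `c i = φ i * (φ 0)⁻¹` act on the image of `φ` by translation by `(1 - α) i`.
The elements of `G` acting on the image of `φ` by translations form a subgroup whose translation
homomorphism to the cyclic group `ℤ/pℤ` has central kernel (the image of `φ` generates `G`), so
this subgroup is abelian. Hence `i ↦ c i` is an injective homomorphism `ℤ/pℤ → G`. Its image is
normal, consists of commutators `c ((1 - α) k) = ⁅φ k, φ 0⁆`, and contains every `φ k / φ 0`, so
the quotient by it is cyclic. Therefore the image is `[G, G]`, generated by `γ = (c 1)⁻¹`.
-/

open Subgroup

section Generation

variable {G : Type*} [Group G] {S : Set G}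

theorem Subgroup.normal_of_forall_conj_mem_iff (hS : closure S = ⊤) {N : Subgroup G}
    (h : ∀ s ∈ S, ∀ n, n ∈ N ↔ s * n * s⁻¹ ∈ N) : N.Normal := by
  rw [← normalizer_eq_top_iff, eq_top_iff, ← hS, closure_le]
  exact fun s hs => mem_normalizer_iff.mpr (h s hs)

/-- All generators lie in the coset `N g`, so `G ⧸ N` is cyclic. -/
theorem commutator_le_of_forall_div_mem (hS : closure S = ⊤) {N : Subgroup G} [N.Normal]
    {g : G} (h : ∀ s ∈ S, s / g ∈ N) : commutator G ≤ N := by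
  rw [← Normal.quotient_commutative_iff_commutator_le]
  suffices IsCyclic (G ⧸ N) from inferInstance
  refine isCyclic_iff_exists_zpowers_eq_top.mpr ⟨g, ?_⟩
  rw [eq_top_iff, ← map_top_of_surjective _ (QuotientGroup.mk'_surjective N), ← hS,
    MonoidHom.map_closure, closure_le]
  rintro _ ⟨s, hs, rfl⟩
  rw [SetLike.mem_coe, QuotientGroup.mk'_apply, QuotientGroup.eq_iff_div_mem.mpr (h s hs)]
  exact mem_zpowers _

end Generation

section TranslationSubgroup

variable {A G : Type*} [AddCommGroup A] [Group G] {φ : A → G}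

theorem conj_mul_eq_add_of_conj_eq_add {g h : G} {v w : A}
    (hg : ∀ m, g * φ m * g⁻¹ = φ (m + v)) (hh : ∀ m, h * φ m * h⁻¹ = φ (m + w)) (m : A) :
    g * h * φ m * (g * h)⁻¹ = φ (m + (w + v)) := by
  rw [← add_assoc, ← hg, ← hh]
  group

variable (φ) in
def translationSubgroup : Subgroup G where
  carrier := {g | ∃ v, ∀ m, g * φ m * g⁻¹ = φ (m + v)}
  one_mem' := ⟨0, by simp⟩
  mul_mem' := fun ⟨v, hg⟩ ⟨w, hh⟩ => ⟨w + v, conj_mul_eq_add_of_conj_eq_add hg hh⟩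
  inv_mem' := by
    rintro g ⟨v, hg⟩
    refine ⟨-v, fun m => ?_⟩
    have hm := hg (m + -v)
    rw [neg_add_cancel_right] at hm
    rw [← hm]
    group

theorem translation_unique (hφ : Function.Injective φ) {g : G} {v w : A}
    (hv : ∀ m, g * φ m * g⁻¹ = φ (m + v)) (hw : ∀ m, g * φ m * g⁻¹ = φ (m + w)) : v = w := by
  simpa using hφ ((hv 0).symm.trans (hw 0))

noncomputable def translationHom (hφ : Function.Injective φ) :
    translationSubgroup φ →* Multiplicative A where
  toFun g := .ofAdd g.2.choose
  map_one' := congrArg _ (translation_unique hφ (1 : translationSubgroup φ).2.choose_spec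
    (fun m => by simp))
  map_mul' g h := by
    rw [← ofAdd_add, add_comm]
    exact congrArg _ (translation_unique hφ (g * h).2.choose_spec
      (conj_mul_eq_add_of_conj_eq_add g.2.choose_spec h.2.choose_spec))

/-- The translation homomorphism has cyclic image and central kernel. -/
theorem commute_of_mem_translationSubgroup [IsAddCyclic A] (hφ : Function.Injective φ)
    (hgen : closure (Set.range φ) = ⊤) {g h : G} (hg : g ∈ translationSubgroup φ)
    (hh : h ∈ translationSubgroup φ) : Commute g h := by
  have hker : (translationHom hφ).ker ≤ center (translationSubgroup φ) := by
    intro z hz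
    have hz0 : z.2.choose = 0 := ofAdd_eq_one.mp hz
    have hzc : (z : G) ∈ centralizer (closure (Set.range φ)) := by
      rw [centralizer_closure, mem_centralizer_iff]
      rintro _ ⟨m, rfl⟩
      have := z.2.choose_spec m
      rw [hz0, add_zero] at this
      exact (mul_inv_eq_iff_eq_mul.mp this).symm
    rw [hgen] at hzc
    exact mem_center_iff.mpr fun y => Subtype.ext (mem_centralizer_iff.mp hzc y (mem_top _))
  have := (translationHom hφ).isMulCommutative_of_isCyclic_of_ker_le_center hker
  exact congrArg Subtype.val (this.is_comm.comm ⟨g, hg⟩ ⟨h, hh⟩)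

end TranslationSubgroup

section AffineRack

variable {K G : Type*} [Field K] [Group G]

/-- `φ` is a rack homomorphism from the affine rack `Aff(K, α)` to the conjugation rack of `G`. -/
def IsAffineRackHom (α : K) (φ : K → G) : Prop :=
  ∀ i j, φ i * φ j * (φ i)⁻¹ = φ ((1 - α) * i + α * j)

namespace IsAffineRackHom

variable {α : K} {φ : K → G}

theorem inv_zero_conj (h : IsAffineRackHom α φ) (hα : α ≠ 0) (m : K) :
    (φ 0)⁻¹ * φ m * φ 0 = φ (α⁻¹ * m) := by
  have hm := h 0 (α⁻¹ * m)
  rw [mul_zero, zero_add, mul_inv_cancel_left₀ hα] at hm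
  rw [← hm]
  group

theorem mul_inv_zero_conj (h : IsAffineRackHom α φ) (hα : α ≠ 0) (k m : K) :
    φ k * (φ 0)⁻¹ * φ m * (φ k * (φ 0)⁻¹)⁻¹ = φ (m + (1 - α) * k) := by
  calc φ k * (φ 0)⁻¹ * φ m * (φ k * (φ 0)⁻¹)⁻¹ = φ k * ((φ 0)⁻¹ * φ m * φ 0) * (φ k)⁻¹ := by
        group
    _ = φ (m + (1 - α) * k) := by rw [h.inv_zero_conj hα, h, mul_inv_cancel_left₀ hα, add_comm]

theorem mul_inv_zero_mem_translationSubgroup (h : IsAffineRackHom α φ) (hα : α ≠ 0) (k : K) :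
    φ k * (φ 0)⁻¹ ∈ translationSubgroup φ :=
  ⟨_, h.mul_inv_zero_conj hα k⟩

/-- `φ ((1 - α) * k) * (φ 0)⁻¹ = ⁅φ k, φ 0⁆`. -/
theorem mul_inv_zero_mem_commutator (h : IsAffineRackHom α φ) (hα1 : α ≠ 1) (i : K) :
    φ i * (φ 0)⁻¹ ∈ commutator G := by
  have hk : (1 - α) * ((1 - α)⁻¹ * i) + α * 0 = i := by
    rw [mul_zero, add_zero, mul_inv_cancel_left₀ (sub_ne_zero.mpr hα1.symm)]
  rw [← hk, ← h, ← commutatorElement_def]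
  exact commutator_mem_commutator (mem_top _) (mem_top _)

variable [IsAddCyclic K]

theorem mul_inv_eq_mul_inv_zero (h : IsAffineRackHom α φ) (hα : α ≠ 0) (hα1 : α ≠ 1)
    (hφ : Function.Injective φ) (hgen : closure (Set.range φ) = ⊤) (i j : K) :
    φ (i + j) * (φ j)⁻¹ = φ i * (φ 0)⁻¹ := by
  set c := φ ((1 - α)⁻¹ * j) * (φ 0)⁻¹
  have hc : ∀ m, c * φ m * c⁻¹ = φ (m + j) := fun m => by
    rw [h.mul_inv_zero_conj hα, mul_inv_cancel_left₀ (sub_ne_zero.mpr hα1.symm)]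
  have hc0 := hc 0
  rw [zero_add] at hc0
  have hcomm : Commute c (φ i * (φ 0)⁻¹) := commute_of_mem_translationSubgroup hφ hgen
    (h.mul_inv_zero_mem_translationSubgroup hα _) (h.mul_inv_zero_mem_translationSubgroup hα i)
  calc φ (i + j) * (φ j)⁻¹ = c * (φ i * (φ 0)⁻¹) * c⁻¹ := by rw [← hc i, ← hc0]; group
    _ = φ i * (φ 0)⁻¹ := by rw [hcomm.eq, mul_inv_cancel_right]

def displacementHom (h : IsAffineRackHom α φ) (hα : α ≠ 0) (hα1 : α ≠ 1)
    (hφ : Function.Injective φ) (hgen : closure (Set.range φ) = ⊤) : Multiplicative K →* G :=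
  MonoidHom.mk' (fun i => φ i.toAdd * (φ 0)⁻¹) fun i j => by
    calc φ (i.toAdd + j.toAdd) * (φ 0)⁻¹
        = φ (i.toAdd + j.toAdd) * (φ j.toAdd)⁻¹ * (φ j.toAdd * (φ 0)⁻¹) := by group
      _ = _ := by rw [h.mul_inv_eq_mul_inv_zero hα hα1 hφ hgen]

@[simp]
theorem displacementHom_apply (h : IsAffineRackHom α φ) (hα : α ≠ 0) (hα1 : α ≠ 1)
    (hφ : Function.Injective φ) (hgen : closure (Set.range φ) = ⊤) (i : Multiplicative K) :
    h.displacementHom hα hα1 hφ hgen i = φ i.toAdd * (φ 0)⁻¹ :=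
  rfl

theorem displacementHom_injective (h : IsAffineRackHom α φ) (hα : α ≠ 0) (hα1 : α ≠ 1)
    (hφ : Function.Injective φ) (hgen : closure (Set.range φ) = ⊤) :
    Function.Injective (h.displacementHom hα hα1 hφ hgen) :=
  fun _ _ hij => Multiplicative.toAdd.injective (hφ (mul_right_cancel hij))

theorem conj_mul_inv_zero (h : IsAffineRackHom α φ) (hα : α ≠ 0) (hα1 : α ≠ 1)
    (hφ : Function.Injective φ) (hgen : closure (Set.range φ) = ⊤) (k i : K) :
    φ k * (φ i * (φ 0)⁻¹) * (φ k)⁻¹ = φ (α * i) * (φ 0)⁻¹ := by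
  calc φ k * (φ i * (φ 0)⁻¹) * (φ k)⁻¹ = φ k * φ i * (φ k)⁻¹ * (φ k * φ 0 * (φ k)⁻¹)⁻¹ := by
        group
    _ = φ (α * i) * (φ 0)⁻¹ := by
        rw [h, h, mul_zero, add_zero, add_comm, h.mul_inv_eq_mul_inv_zero hα hα1 hφ hgen]

theorem range_displacementHom_normal (h : IsAffineRackHom α φ) (hα : α ≠ 0) (hα1 : α ≠ 1)
    (hφ : Function.Injective φ) (hgen : closure (Set.range φ) = ⊤) :
    (h.displacementHom hα hα1 hφ hgen).range.Normal := by
  refine normal_of_forall_conj_mem_iff hgen ?_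
  rintro _ ⟨k, rfl⟩ n
  constructor
  · rintro ⟨i, rfl⟩
    exact ⟨.ofAdd (α * i.toAdd), (h.conj_mul_inv_zero hα hα1 hφ hgen k _).symm⟩
  · rintro ⟨j, hj⟩
    refine ⟨.ofAdd (α⁻¹ * j.toAdd), conj_injective (x := φ k) ?_⟩
    simp only [displacementHom_apply, toAdd_ofAdd] at hj ⊢
    rw [h.conj_mul_inv_zero hα hα1 hφ hgen, mul_inv_cancel_left₀ hα, hj]

theorem range_displacementHom (h : IsAffineRackHom α φ) (hα : α ≠ 0) (hα1 : α ≠ 1)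
    (hφ : Function.Injective φ) (hgen : closure (Set.range φ) = ⊤) :
    (h.displacementHom hα hα1 hφ hgen).range = commutator G := by
  have := h.range_displacementHom_normal hα hα1 hφ hgen
  refine le_antisymm ?_ (commutator_le_of_forall_div_mem hgen (g := φ 0) ?_)
  · rintro _ ⟨i, rfl⟩
    exact h.mul_inv_zero_mem_commutator hα1 _
  · rintro _ ⟨k, rfl⟩
    exact ⟨.ofAdd k, (div_eq_mul_inv _ _).symm⟩

end IsAffineRackHom

end AffineRack

theorem stmt6_general {G : Type*} [Group G] (p : ℕ) (hp : p.Prime)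
    (α : ZMod p) (hα0 : α ≠ 0) (hα1 : α ≠ 1)
    (φ : ZMod p → G) (hφinj : Function.Injective φ)
    (hXgen : Subgroup.closure (Set.range φ) = ⊤)
    (hrack : ∀ i j : ZMod p, φ i * φ j * (φ i)⁻¹ = φ ((1 - α) * i + α * j)) :
    commutator G = Subgroup.zpowers (φ 0 * (φ 1)⁻¹) ∧
    Nat.card (commutator G) = p ∧
    orderOf (φ 0 * (φ 1)⁻¹) = p := by
  have := Fact.mk hp
  have h : IsAffineRackHom α φ := hrack
  set c := h.displacementHom hα0 hα1 hφinj hXgen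
  have hγ : φ 0 * (φ 1)⁻¹ = (c (.ofAdd 1))⁻¹ := by simp [c]
  have hord : orderOf (φ 0 * (φ 1)⁻¹) = p := by
    rw [hγ, orderOf_inv, orderOf_injective c (h.displacementHom_injective ..),
      orderOf_ofAdd_eq_addOrderOf, ZMod.addOrderOf_one]
  have hcomm : commutator G = zpowers (φ 0 * (φ 1)⁻¹) := by
    rw [← h.range_displacementHom, hγ, zpowers_inv, ← MonoidHom.map_zpowers,
      zpowers_eq_top_of_prime_card (p := p) (by simp) (by simp), MonoidHom.range_eq_map]
  exact ⟨hcomm, by rw [hcomm, Nat.card_zpowers, hord], hord⟩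

/-- Let `p` be a prime, `α ∈ ℤ/pℤ \ {0,1}`, `G` a group, `X` a conjugacy class of
`G` generating `G`, and `φ : ℤ/pℤ → X` a bijection with `φ(i)φ(j)φ(i)⁻¹ = φ((1−α)i + αj)`.
Set `γ = φ(0)φ(1)⁻¹`. Then `[G,G]` is cyclic of order `p` generated by `γ`; in particular `γ`
has order `p` in `G`. -/
theorem stmt6 {G : Type*} [Group G] (p : ℕ) (hp : p.Prime)
    (α : ZMod p) (hα0 : α ≠ 0) (hα1 : α ≠ 1)
    (φ : ZMod p → G) (hφinj : Function.Injective φ)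
    (hXconj : ∃ x : G, Set.range φ = {y | IsConj x y})
    (hXgen : Subgroup.closure (Set.range φ) = ⊤)
    (hrack : ∀ i j : ZMod p, φ i * φ j * (φ i)⁻¹ = φ ((1 - α) * i + α * j)) :
    commutator G = Subgroup.zpowers (φ 0 * (φ 1)⁻¹) ∧
    Nat.card (commutator G) = p ∧
    orderOf (φ 0 * (φ 1)⁻¹) = p :=
  stmt6_general p hp α hα0 hα1 φ hφinj hXgen hrack
end

section
/- Let p be a prime, α ∈ ℤ/pℤ \ {0,1}, G a group, X a conjugacy class of G generating G, and φ : ℤ/pℤ → X a bijection satisfying φ(i)φ(j)φ(i)⁻¹ = φ((1−α)i + αj) for all i, j ∈ ℤ/pℤ. Set γ = φ(0)φ(1)⁻¹ and let β ∈ ℤ/pℤ with β(α−1) = 1. Let k be a field, V a module over the group G (a kG-module), w₀ ∈ V, and λ ∈ k with φ(0) · w₀ = λ w₀. For i ∈ ℤ/pℤ define w_i = γ^{iβ} · w₀ (powers taken via any integer representative of iβ; note γ^p = 1). Then φ(i) · w_j = λ w_{(1−α)i + αj} for all i, j ∈ ℤ/pℤ. -/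
/-! Conjugation by `γ = φ 0 * (φ 1)⁻¹` shifts indices by `α - 1` and fixes `γ`, so
`φ u * (φ (u + 1))⁻¹ = γ` for every `u`, the multiples of the unit `α - 1` exhausting `ℤ/nℤ`.
Telescoping gives `γ ^ x = φ u * (φ (u + x))⁻¹`, hence `φ i = γ ^ (-i) * φ 0` and
`φ 0 * γ ^ x * (φ 0)⁻¹ = γ ^ (α x)`. Together, `φ i * γ ^ (j β) = γ ^ (M β) * φ 0` with
`M = (1 - α) i + α j`, and applying both sides to the eigenvector `w₀` of `φ 0` gives the claim. -/

section Telescope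

variable {G : Type*} [Group G] {n : ℕ} [NeZero n] {f : ZMod n → G} {g : G}

theorem pow_val_eq_mul_inv (hf : ∀ u, f u * (f (u + 1))⁻¹ = g) (u x : ZMod n) :
    g ^ x.val = f u * (f (u + x))⁻¹ := by
  have nat_pow : ∀ m : ℕ, g ^ m = f u * (f (u + m))⁻¹ := by
    intro m
    induction m with
    | zero => simp
    | succ m ih => rw [pow_succ, ih, ← hf (u + m), Nat.cast_succ, add_assoc]; group
  rw [nat_pow, ZMod.natCast_zmod_val]

theorem pow_val_add (hf : ∀ u, f u * (f (u + 1))⁻¹ = g) (x y : ZMod n) :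
    g ^ (x + y).val = g ^ x.val * g ^ y.val := by
  rw [pow_val_eq_mul_inv hf 0, pow_val_eq_mul_inv hf 0, pow_val_eq_mul_inv hf x, zero_add,
    zero_add]
  group

end Telescope

namespace AffineRack

variable {G : Type*} [Group G] {n : ℕ} {α : ZMod n} {φ : ZMod n → G}

theorem conj_mul_inv_zero_one (hα : IsUnit α)
    (hrack : ∀ i j, φ i * φ j * (φ i)⁻¹ = φ ((1 - α) * i + α * j)) (j : ZMod n) :
    (φ 0 * (φ 1)⁻¹) * φ j * (φ 0 * (φ 1)⁻¹)⁻¹ = φ (j + (α - 1)) := by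
  obtain ⟨a, rfl⟩ := hα
  set j' := 1 + ↑a⁻¹ * (j - 1)
  have h1 : φ 1 * φ j' * (φ 1)⁻¹ = φ j := by
    rw [hrack]; congr 1; linear_combination (j - 1) * Units.mul_inv a
  have h0 : φ 0 * φ j' * (φ 0)⁻¹ = φ (j + (a - 1)) := by
    rw [hrack]; congr 1; linear_combination (j - 1) * Units.mul_inv a
  rw [← h1, ← h0]
  group

theorem mul_inv_add_one_eq [NeZero n] {β : ZMod n} (hα : IsUnit α) (hβ : β * (α - 1) = 1)
    (hrack : ∀ i j, φ i * φ j * (φ i)⁻¹ = φ ((1 - α) * i + α * j)) (u : ZMod n) :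
    φ u * (φ (u + 1))⁻¹ = φ 0 * (φ 1)⁻¹ := by
  set γ := φ 0 * (φ 1)⁻¹
  have shift : ∀ x, φ (x + (α - 1)) * (φ (x + (α - 1) + 1))⁻¹
      = γ * (φ x * (φ (x + 1))⁻¹) * γ⁻¹ := by
    intro x
    rw [← conj_mul_inv_zero_one hα hrack, add_right_comm, ← conj_mul_inv_zero_one hα hrack]
    simp only [γ]
    group
  have multiples : ∀ t : ℕ, φ (t * (α - 1)) * (φ (t * (α - 1) + 1))⁻¹ = γ := by
    intro t
    induction t with
    | zero => simp [γ]
    | succ t ih => rw [Nat.cast_succ, add_one_mul, shift, ih]; group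
  simpa only [ZMod.natCast_zmod_val, mul_assoc, hβ, mul_one] using multiples (u * β).val

theorem conj_zero_pow_val [NeZero n] {β : ZMod n} (hα : IsUnit α) (hβ : β * (α - 1) = 1)
    (hrack : ∀ i j, φ i * φ j * (φ i)⁻¹ = φ ((1 - α) * i + α * j)) (x : ZMod n) :
    φ 0 * (φ 0 * (φ 1)⁻¹) ^ x.val * (φ 0)⁻¹ = (φ 0 * (φ 1)⁻¹) ^ (α * x).val := by
  have hstep := mul_inv_add_one_eq hα hβ hrack
  have h0x : φ 0 * φ x * (φ 0)⁻¹ = φ (α * x) := by simpa using hrack 0 x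
  rw [pow_val_eq_mul_inv hstep 0, pow_val_eq_mul_inv hstep 0, zero_add, zero_add, ← h0x]
  group

theorem mul_pow_val [NeZero n] {β : ZMod n} (hα : IsUnit α) (hβ : β * (α - 1) = 1)
    (hrack : ∀ i j, φ i * φ j * (φ i)⁻¹ = φ ((1 - α) * i + α * j)) (i x : ZMod n) :
    φ i * (φ 0 * (φ 1)⁻¹) ^ x.val = (φ 0 * (φ 1)⁻¹) ^ (-i + α * x).val * φ 0 := by
  have hstep := mul_inv_add_one_eq hα hβ hrack
  have hφi : φ i = (φ 0 * (φ 1)⁻¹) ^ (-i).val * φ 0 := by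
    rw [pow_val_eq_mul_inv hstep i, add_neg_cancel, inv_mul_cancel_right]
  rw [pow_val_add hstep, ← conj_zero_pow_val hα hβ hrack, hφi]
  group

end AffineRack

theorem stmt10_general {k : Type*} [Field k] {G : Type*} [Group G]
    {V : Type*} [AddCommGroup V] [Module k V]
    (ρ : Representation k G V)
    (p : ℕ) (hp : p.Prime)
    (α : ZMod p) (hα0 : α ≠ 0)
    (β : ZMod p) (hβ : β * (α - 1) = 1)
    (φ : ZMod p → G)
    (hrack : ∀ i j : ZMod p, φ i * φ j * (φ i)⁻¹ = φ ((1 - α) * i + α * j))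
    (w₀ : V) (lam : k) (hw₀ : ρ (φ 0) w₀ = lam • w₀)
    (w : ZMod p → V)
    (hw : ∀ i : ZMod p, w i = ρ ((φ 0 * (φ 1)⁻¹) ^ (i * β).val) w₀) :
    ∀ i j : ZMod p, ρ (φ i) (w j) = lam • w ((1 - α) * i + α * j) := by
  have : Fact p.Prime := ⟨hp⟩
  intro i j
  have hindex : ((1 - α) * i + α * j) * β = -i + α * (j * β) := by
    linear_combination (-i) * hβ
  rw [hw, hw, ← Module.End.mul_apply, ← map_mul, AffineRack.mul_pow_val hα0.isUnit hβ hrack,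
    map_mul, Module.End.mul_apply, hw₀, map_smul, hindex]

/-- Let `p` be a prime, `α ∈ ℤ/pℤ \ {0,1}`, `G` a group, `X` a conjugacy class of
`G` generating `G`, and `φ : ℤ/pℤ → X` a bijection with `φ(i)φ(j)φ(i)⁻¹ = φ((1−α)i + αj)`.
Set `γ = φ(0)φ(1)⁻¹` and let `β ∈ ℤ/pℤ` with `β(α−1) = 1`. Let `k` be a field, `V` a
`kG`-module, `w₀ ∈ V` and `λ ∈ k` with `φ(0)·w₀ = λ w₀`. Define `w_i = γ^{iβ} · w₀`. Then
`φ(i) · w_j = λ w_{(1−α)i + αj}` for all `i, j ∈ ℤ/pℤ`. -/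
theorem stmt10 {k : Type*} [Field k] {G : Type*} [Group G]
    {V : Type*} [AddCommGroup V] [Module k V]
    (ρ : Representation k G V)
    (p : ℕ) (hp : p.Prime)
    (α : ZMod p) (hα0 : α ≠ 0) (hα1 : α ≠ 1)
    (β : ZMod p) (hβ : β * (α - 1) = 1)
    (φ : ZMod p → G) (hφinj : Function.Injective φ)
    (hXconj : ∃ x : G, Set.range φ = {y | IsConj x y})
    (hXgen : Subgroup.closure (Set.range φ) = ⊤)
    (hrack : ∀ i j : ZMod p, φ i * φ j * (φ i)⁻¹ = φ ((1 - α) * i + α * j))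
    (w₀ : V) (lam : k) (hw₀ : ρ (φ 0) w₀ = lam • w₀)
    (w : ZMod p → V)
    (hw : ∀ i : ZMod p, w i = ρ ((φ 0 * (φ 1)⁻¹) ^ (i * β).val) w₀) :
    ∀ i j : ZMod p, ρ (φ i) (w j) = lam • w ((1 - α) * i + α * j) :=
  stmt10_general ρ p hp α hα0 β hβ φ hrack w₀ lam hw₀ w hw
end

section
/- Let p be a prime, α ∈ ℤ/pℤ \ {0,1}, G a group, X a conjugacy class of G generating G, and φ : ℤ/pℤ → X a bijection satisfying φ(i)φ(j)φ(i)⁻¹ = φ((1−α)i + αj) for all i, j ∈ ℤ/pℤ. Set γ = φ(0)φ(1)⁻¹. Let k be a field of characteristic p, and let J be the two-sided ideal of the group algebra kG generated by γ − 1. Then J equals both the left ideal kG(γ − 1) and the right ideal (γ − 1)kG, J^p = 0 (in particular J is nilpotent), and J is a Hopf ideal of kG: Δ(J) ⊆ J ⊗ kG + kG ⊗ J, ε(J) = 0, and S(J) ⊆ J. -/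
/-!
Conjugation by `γ = φ 0 * (φ 1)⁻¹` translates the indices of the rack by `α - 1 ≠ 0`, so every
quotient `φ i * (φ (i + 1))⁻¹` equals `γ`; telescoping gives `γ ^ p = 1` and
`φ i * γ * (φ i)⁻¹ = γ ^ α`. Since the `φ i` generate `G`, every conjugate of `γ` is a power of
`γ`, and `γ ^ m - 1` is a multiple of `γ - 1` on either side. Hence `γ - 1` is a normal element of
`kG`: `kG (γ - 1) = (γ - 1) kG` is the two-sided ideal it generates, its `p`-th power lies in
`kG (γ - 1) ^ p = kG (γ ^ p - 1) = 0` (characteristic `p`), and it is spanned by the differences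
`g γ - g` of group elements, on which the Hopf ideal conditions are immediate.
-/

open TensorProduct

/-- The image `P ⊗ Q` of a tensor product of two submodules inside `M ⊗[k] N`. -/
noncomputable def subTensor11 {k : Type*} [CommSemiring k] {M N : Type*}
    [AddCommMonoid M] [Module k M] [AddCommMonoid N] [Module k N]
    (P : Submodule k M) (Q : Submodule k N) : Submodule k (M ⊗[k] N) :=
  LinearMap.range (TensorProduct.map P.subtype Q.subtype)

section AffineRack

variable {G : Type*} [Group G] {p : ℕ} [Fact p.Prime] {α : ZMod p} {φ : ZMod p → G}

theorem rack_inv_conj (hα0 : α ≠ 0)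
    (hrack : ∀ i j : ZMod p, φ i * φ j * (φ i)⁻¹ = φ ((1 - α) * i + α * j)) (i j : ZMod p) :
    (φ i)⁻¹ * φ j * φ i = φ (α⁻¹ * (j - (1 - α) * i)) := by
  have h := hrack i (α⁻¹ * (j - (1 - α) * i))
  rw [mul_inv_cancel_left₀ hα0, add_sub_cancel] at h
  rw [← h]
  group

theorem rack_conj_quotient (hα0 : α ≠ 0)
    (hrack : ∀ i j : ZMod p, φ i * φ j * (φ i)⁻¹ = φ ((1 - α) * i + α * j)) (j : ZMod p) :
    φ 0 * (φ 1)⁻¹ * φ j * (φ 0 * (φ 1)⁻¹)⁻¹ = φ (j + (α - 1)) := by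
  calc φ 0 * (φ 1)⁻¹ * φ j * (φ 0 * (φ 1)⁻¹)⁻¹ = φ 0 * ((φ 1)⁻¹ * φ j * φ 1) * (φ 0)⁻¹ := by
        group
    _ = φ (j + (α - 1)) := by
        rw [rack_inv_conj hα0 hrack, hrack, mul_inv_cancel_left₀ hα0]
        ring_nf

theorem rack_conj_quotient_pow (hα0 : α ≠ 0)
    (hrack : ∀ i j : ZMod p, φ i * φ j * (φ i)⁻¹ = φ ((1 - α) * i + α * j)) (m : ℕ) (j : ZMod p) :
    (φ 0 * (φ 1)⁻¹) ^ m * φ j * ((φ 0 * (φ 1)⁻¹) ^ m)⁻¹ = φ (j + m * (α - 1)) := by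
  induction m with
  | zero => simp
  | succ m ih =>
    set γ := φ 0 * (φ 1)⁻¹
    calc γ ^ (m + 1) * φ j * (γ ^ (m + 1))⁻¹ = γ * (γ ^ m * φ j * (γ ^ m)⁻¹) * γ⁻¹ := by group
      _ = φ (j + (m + 1 : ℕ) * (α - 1)) := by
        rw [ih, rack_conj_quotient hα0 hrack]
        push_cast
        ring_nf

theorem rack_quotient_succ (hα0 : α ≠ 0) (hα1 : α ≠ 1)
    (hrack : ∀ i j : ZMod p, φ i * φ j * (φ i)⁻¹ = φ ((1 - α) * i + α * j)) (i : ZMod p) :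
    φ i * (φ (i + 1))⁻¹ = φ 0 * (φ 1)⁻¹ := by
  -- Conjugation by `γ ^ m` fixes `γ` and translates indices by `m * (α - 1)`, which reaches every `i`.
  obtain ⟨m, rfl⟩ : ∃ m : ℕ, (m : ZMod p) * (α - 1) = i :=
    ⟨(i * (α - 1)⁻¹).val, by
      rw [ZMod.natCast_zmod_val, inv_mul_cancel_right₀ (sub_ne_zero.mpr hα1)]⟩
  set γ := φ 0 * (φ 1)⁻¹
  calc φ (m * (α - 1)) * (φ (m * (α - 1) + 1))⁻¹
      = (γ ^ m * φ 0 * (γ ^ m)⁻¹) * (γ ^ m * φ 1 * (γ ^ m)⁻¹)⁻¹ := by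
        rw [rack_conj_quotient_pow hα0 hrack, rack_conj_quotient_pow hα0 hrack, zero_add,
          add_comm 1]
    _ = γ ^ m * γ * (γ ^ m)⁻¹ := by
        simp only [γ, mul_inv_rev, inv_inv, mul_assoc, inv_mul_cancel_left]
    _ = γ := by rw [(Commute.self_pow γ m).symm.eq, mul_inv_cancel_right]

theorem rack_quotient_add (hα0 : α ≠ 0) (hα1 : α ≠ 1)
    (hrack : ∀ i j : ZMod p, φ i * φ j * (φ i)⁻¹ = φ ((1 - α) * i + α * j)) (i : ZMod p) (m : ℕ) :
    φ i * (φ (i + m))⁻¹ = (φ 0 * (φ 1)⁻¹) ^ m := by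
  induction m with
  | zero => simp
  | succ m ih =>
    calc φ i * (φ (i + (m + 1 : ℕ)))⁻¹ = φ i * (φ (i + m))⁻¹ * (φ (i + m) * (φ (i + m + 1))⁻¹) := by
          push_cast; group
      _ = (φ 0 * (φ 1)⁻¹) ^ (m + 1) := by rw [ih, rack_quotient_succ hα0 hα1 hrack, pow_succ]

theorem rack_quotient_pow_char (hα0 : α ≠ 0) (hα1 : α ≠ 1)
    (hrack : ∀ i j : ZMod p, φ i * φ j * (φ i)⁻¹ = φ ((1 - α) * i + α * j)) :
    (φ 0 * (φ 1)⁻¹) ^ p = 1 := by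
  rw [← rack_quotient_add hα0 hα1 hrack 0 p, ZMod.natCast_self, add_zero, mul_inv_cancel]

theorem rack_conj_quotient_eq_pow (hα0 : α ≠ 0) (hα1 : α ≠ 1)
    (hrack : ∀ i j : ZMod p, φ i * φ j * (φ i)⁻¹ = φ ((1 - α) * i + α * j)) (i : ZMod p) :
    φ i * (φ 0 * (φ 1)⁻¹) * (φ i)⁻¹ = (φ 0 * (φ 1)⁻¹) ^ α.val := by
  calc φ i * (φ 0 * (φ 1)⁻¹) * (φ i)⁻¹ = (φ i * φ 0 * (φ i)⁻¹) * (φ i * φ 1 * (φ i)⁻¹)⁻¹ := by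
        group
    _ = φ ((1 - α) * i) * (φ ((1 - α) * i + α.val))⁻¹ := by
        rw [hrack, hrack, ZMod.natCast_zmod_val, mul_zero, mul_one, add_zero]
    _ = (φ 0 * (φ 1)⁻¹) ^ α.val := rack_quotient_add hα0 hα1 hrack _ _

theorem conj_rack_quotient_mem_powers (hα0 : α ≠ 0) (hα1 : α ≠ 1)
    (hrack : ∀ i j : ZMod p, φ i * φ j * (φ i)⁻¹ = φ ((1 - α) * i + α * j))
    (hgen : Subgroup.closure (Set.range φ) = ⊤) (g : G) :
    g * (φ 0 * (φ 1)⁻¹) * g⁻¹ ∈ Submonoid.powers (φ 0 * (φ 1)⁻¹) := by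
  set γ := φ 0 * (φ 1)⁻¹
  have : Finite (Submonoid.powers γ) := (isOfFinOrder_iff_pow_eq_one.mpr
    ⟨p, (Fact.out : p.Prime).pos, rack_quotient_pow_char hα0 hα1 hrack⟩).finite_powers
  -- For the finite set of powers of `γ`, being normalized by `x` only needs `x γ x⁻¹` to be a power.
  have hnormalizer : Subgroup.normalizer (Submonoid.powers γ : Set G) = ⊤ := by
    rw [eq_top_iff, ← hgen, Subgroup.closure_le]
    rintro _ ⟨i, rfl⟩
    refine Subgroup.mem_normalizer_fintype fun _ ⟨m, hm⟩ ↦ ⟨α.val * m, ?_⟩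
    dsimp only at hm ⊢
    rw [← hm, ← conj_pow, rack_conj_quotient_eq_pow hα0 hα1 hrack, pow_mul]
  exact (Subgroup.mem_set_normalizer_iff.mp (hnormalizer ▸ Subgroup.mem_top g) γ).mp
    (Submonoid.mem_powers γ)

end AffineRack

section TwoSided

variable {k A : Type*} [CommSemiring k] [Semiring A] [Algebra k A] {c : A}

theorem eq_range_mulRight_of_minimal
    (hc : LinearMap.range (LinearMap.mulLeft k c) ≤ LinearMap.range (LinearMap.mulRight k c))
    {J : Submodule k A} (hJmem : c ∈ J) (hJ2 : ∀ x ∈ J, ∀ a : A, a * x ∈ J ∧ x * a ∈ J)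
    (hJmin : ∀ I : Submodule k A, c ∈ I → (∀ x ∈ I, ∀ a : A, a * x ∈ I ∧ x * a ∈ I) → J ≤ I) :
    J = LinearMap.range (LinearMap.mulRight k c) := by
  refine le_antisymm (hJmin _ ⟨1, one_mul c⟩ ?_) ?_
  · rintro _ ⟨b, rfl⟩ a
    obtain ⟨d, hd⟩ := hc ⟨a, rfl⟩
    refine ⟨⟨a * b, mul_assoc a b c⟩, ⟨b * d, ?_⟩⟩
    simp only [LinearMap.mulRight_apply, LinearMap.mulLeft_apply] at hd ⊢
    rw [mul_assoc, hd, mul_assoc]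
  · rintro _ ⟨a, rfl⟩
    exact (hJ2 c hJmem a).1

theorem range_mulRight_pow_le
    (hc : LinearMap.range (LinearMap.mulLeft k c) ≤ LinearMap.range (LinearMap.mulRight k c))
    (n : ℕ) :
    LinearMap.range (LinearMap.mulRight k c) ^ n ≤
      LinearMap.range (LinearMap.mulRight k (c ^ n)) := by
  induction n with
  | zero => simp [Submodule.one_eq_range]
  | succ n ih =>
    rw [pow_succ']
    refine Submodule.mul_le.mpr ?_
    rintro _ ⟨a, rfl⟩ _ hy
    obtain ⟨b, rfl⟩ := ih hy
    obtain ⟨d, hd⟩ := hc ⟨b, rfl⟩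
    refine ⟨a * d, ?_⟩
    simp only [LinearMap.mulRight_apply, LinearMap.mulLeft_apply] at hd ⊢
    rw [pow_succ', mul_assoc a c, ← mul_assoc c, ← hd, mul_assoc, mul_assoc]

end TwoSided

theorem tmul_mem_subTensor11 {k M N : Type*} [CommSemiring k] [AddCommMonoid M] [Module k M]
    [AddCommMonoid N] [Module k N] {P : Submodule k M} {Q : Submodule k N} {x : M} {y : N}
    (hx : x ∈ P) (hy : y ∈ Q) : x ⊗ₜ[k] y ∈ subTensor11 P Q :=
  ⟨⟨x, hx⟩ ⊗ₜ ⟨y, hy⟩, rfl⟩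

theorem tmul_sub_tmul_mem_subTensor11_sup {k M N : Type*} [CommRing k] [AddCommGroup M]
    [Module k M] [AddCommGroup N] [Module k N] {P : Submodule k M} {Q : Submodule k N}
    {x y : M} {x' y' : N} (hx : x - y ∈ P) (hx' : x' - y' ∈ Q) :
    x ⊗ₜ[k] x' - y ⊗ₜ[k] y' ∈ subTensor11 P ⊤ ⊔ subTensor11 ⊤ Q := by
  have : x ⊗ₜ[k] x' - y ⊗ₜ[k] y' = (x - y) ⊗ₜ x' + y ⊗ₜ (x' - y') := by
    rw [sub_tmul, tmul_sub]; abel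
  rw [this]
  exact Submodule.add_mem_sup (tmul_mem_subTensor11 hx Submodule.mem_top)
    (tmul_mem_subTensor11 Submodule.mem_top hx')

theorem sub_one_pow_char_eq_zero {R : Type*} [Ring R] (p : ℕ) [Fact p.Prime] [CharP R p] {u : R}
    (hu : u ^ p = 1) : (u - 1) ^ p = 0 := by
  rw [sub_pow_char_of_commute p (Commute.one_right u), hu, one_pow, sub_self]

namespace MonoidAlgebra

variable {k G : Type*}

theorem range_mulRight_le_iff [CommSemiring k] [Monoid G] {c : MonoidAlgebra k G}
    {K : Submodule k (MonoidAlgebra k G)} :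
    LinearMap.range (LinearMap.mulRight k c) ≤ K ↔ ∀ g : G, of k G g * c ∈ K := by
  refine ⟨fun h g ↦ h ⟨of k G g, rfl⟩, fun h ↦ ?_⟩
  rintro _ ⟨a, rfl⟩
  induction a using MonoidAlgebra.induction_on with
  | of g => exact h g
  | add a b ha hb => simpa only [map_add] using K.add_mem ha hb
  | smul r a ha => simpa only [map_smul] using K.smul_mem r ha

theorem range_mulLeft_le_iff [CommSemiring k] [Monoid G] {c : MonoidAlgebra k G}
    {K : Submodule k (MonoidAlgebra k G)} :
    LinearMap.range (LinearMap.mulLeft k c) ≤ K ↔ ∀ g : G, c * of k G g ∈ K := by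
  refine ⟨fun h g ↦ h ⟨of k G g, rfl⟩, fun h ↦ ?_⟩
  rintro _ ⟨a, rfl⟩
  induction a using MonoidAlgebra.induction_on with
  | of g => exact h g
  | add a b ha hb => simpa only [map_add] using K.add_mem ha hb
  | smul r a ha => simpa only [map_smul] using K.smul_mem r ha

variable [CommRing k] [Group G] {γ : G}

theorem of_sub_one_mem_range_mulRight {x : G} (hx : x ∈ Submonoid.powers γ) :
    of k G x - 1 ∈ LinearMap.range (LinearMap.mulRight k (of k G γ - 1)) := by
  obtain ⟨m, rfl⟩ := hx
  exact ⟨∑ i ∈ Finset.range m, of k G γ ^ i, by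
    rw [LinearMap.mulRight_apply, geom_sum_mul, map_pow]⟩

theorem of_sub_one_mem_range_mulLeft {x : G} (hx : x ∈ Submonoid.powers γ) :
    of k G x - 1 ∈ LinearMap.range (LinearMap.mulLeft k (of k G γ - 1)) := by
  obtain ⟨m, rfl⟩ := hx
  exact ⟨∑ i ∈ Finset.range m, of k G γ ^ i, by
    rw [LinearMap.mulLeft_apply, mul_geom_sum, map_pow]⟩

theorem range_mulLeft_eq_range_mulRight (hγ : ∀ g : G, g * γ * g⁻¹ ∈ Submonoid.powers γ) :
    LinearMap.range (LinearMap.mulLeft k (of k G γ - 1)) =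
      LinearMap.range (LinearMap.mulRight k (of k G γ - 1)) := by
  refine le_antisymm (range_mulLeft_le_iff.mpr fun g ↦ ?_) (range_mulRight_le_iff.mpr fun g ↦ ?_)
  · obtain ⟨b, hb⟩ := of_sub_one_mem_range_mulRight (k := k) (by simpa using hγ g⁻¹)
    refine ⟨of k G g * b, ?_⟩
    simp only [LinearMap.mulRight_apply] at hb ⊢
    rw [mul_assoc, hb, mul_sub, sub_mul, ← map_mul, ← map_mul]
    group
  · obtain ⟨b, hb⟩ := of_sub_one_mem_range_mulLeft (k := k) (hγ g)
    refine ⟨b * of k G g, ?_⟩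
    simp only [LinearMap.mulLeft_apply] at hb ⊢
    rw [← mul_assoc, hb, mul_sub, sub_mul, ← map_mul, ← map_mul]
    group

theorem of_mul_of_sub_one (g : G) : of k G g * (of k G γ - 1) = of k G (g * γ) - of k G g := by
  rw [mul_sub, mul_one, ← map_mul]

theorem counit_eq_zero_of_mem_range_mulRight (ε : MonoidAlgebra k G →ₗ[k] k)
    (hε : ∀ g : G, ε (of k G g) = 1) {x : MonoidAlgebra k G}
    (hx : x ∈ LinearMap.range (LinearMap.mulRight k (of k G γ - 1))) : ε x = 0 := by
  refine (range_mulRight_le_iff (K := LinearMap.ker ε).mpr fun g ↦ ?_) hx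
  rw [LinearMap.mem_ker, of_mul_of_sub_one, map_sub, hε, hε, sub_self]

variable {J : Submodule k (MonoidAlgebra k G)}

theorem comul_mem_sup_of_mem (hJ : J = LinearMap.range (LinearMap.mulRight k (of k G γ - 1)))
    (Δ : MonoidAlgebra k G →ₗ[k] MonoidAlgebra k G ⊗[k] MonoidAlgebra k G)
    (hΔ : ∀ g : G, Δ (of k G g) = of k G g ⊗ₜ[k] of k G g) {x : MonoidAlgebra k G} (hx : x ∈ J) :
    Δ x ∈ subTensor11 J ⊤ ⊔ subTensor11 ⊤ J := by
  rw [hJ] at hx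
  refine (range_mulRight_le_iff (K := (subTensor11 J ⊤ ⊔ subTensor11 ⊤ J).comap Δ).mpr
    fun g ↦ ?_) hx
  have hmem : of k G (g * γ) - of k G g ∈ J := hJ ▸ of_mul_of_sub_one (k := k) g ▸ ⟨of k G g, rfl⟩
  rw [Submodule.mem_comap, of_mul_of_sub_one, map_sub, hΔ, hΔ]
  exact tmul_sub_tmul_mem_subTensor11_sup hmem hmem

theorem antipode_mem_of_mem (hJ : J = LinearMap.range (LinearMap.mulRight k (of k G γ - 1)))
    (hJ2 : ∀ x ∈ J, ∀ a, a * x ∈ J ∧ x * a ∈ J)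
    (S : MonoidAlgebra k G →ₗ[k] MonoidAlgebra k G) (hS : ∀ g : G, S (of k G g) = of k G g⁻¹)
    {x : MonoidAlgebra k G} (hx : x ∈ J) : S x ∈ J := by
  have hc : of k G γ - 1 ∈ J := hJ ▸ ⟨1, one_mul _⟩
  rw [hJ] at hx
  refine (range_mulRight_le_iff (K := J.comap S).mpr fun g ↦ ?_) hx
  have : S (of k G g * (of k G γ - 1)) = -(of k G γ⁻¹ * (of k G γ - 1) * of k G g⁻¹) := by
    rw [of_mul_of_sub_one, map_sub, hS, hS, mul_sub, ← map_mul, inv_mul_cancel, map_one, mul_one,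
      sub_mul, ← map_mul, one_mul, mul_inv_rev, neg_sub]
  rw [Submodule.mem_comap, this]
  exact J.neg_mem (hJ2 _ (hJ2 _ hc _).1 _).2

end MonoidAlgebra

theorem stmt11_general {k : Type*} [Field k] {G : Type*} [Group G]
    (p : ℕ) (hp : p.Prime) [CharP k p]
    (α : ZMod p) (hα0 : α ≠ 0) (hα1 : α ≠ 1)
    (φ : ZMod p → G)
    (hXgen : Subgroup.closure (Set.range φ) = ⊤)
    (hrack : ∀ i j : ZMod p, φ i * φ j * (φ i)⁻¹ = φ ((1 - α) * i + α * j))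
    -- the structure maps of the Hopf algebra kG
    (Δ : MonoidAlgebra k G →ₗ[k] MonoidAlgebra k G ⊗[k] MonoidAlgebra k G)
    (hΔ : ∀ g : G, Δ (MonoidAlgebra.of k G g) =
      MonoidAlgebra.of k G g ⊗ₜ[k] MonoidAlgebra.of k G g)
    (ε : MonoidAlgebra k G →ₗ[k] k)
    (hε : ∀ g : G, ε (MonoidAlgebra.of k G g) = 1)
    (S : MonoidAlgebra k G →ₗ[k] MonoidAlgebra k G)
    (hS : ∀ g : G, S (MonoidAlgebra.of k G g) = MonoidAlgebra.of k G g⁻¹)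
    -- J is the two-sided ideal of kG generated by γ - 1
    (J : Submodule k (MonoidAlgebra k G))
    (hJmem : MonoidAlgebra.of k G (φ 0 * (φ 1)⁻¹) - 1 ∈ J)
    (hJ2 : ∀ x ∈ J, ∀ a : MonoidAlgebra k G, a * x ∈ J ∧ x * a ∈ J)
    (hJmin : ∀ I : Submodule k (MonoidAlgebra k G),
      MonoidAlgebra.of k G (φ 0 * (φ 1)⁻¹) - 1 ∈ I →
      (∀ x ∈ I, ∀ a : MonoidAlgebra k G, a * x ∈ I ∧ x * a ∈ I) → J ≤ I) :
    (J : Set (MonoidAlgebra k G)) =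
        {x | ∃ a : MonoidAlgebra k G, x = a * (MonoidAlgebra.of k G (φ 0 * (φ 1)⁻¹) - 1)} ∧
    (J : Set (MonoidAlgebra k G)) =
        {x | ∃ a : MonoidAlgebra k G, x = (MonoidAlgebra.of k G (φ 0 * (φ 1)⁻¹) - 1) * a} ∧
    J ^ p = ⊥ ∧
    (∀ x ∈ J, Δ x ∈ subTensor11 J ⊤ ⊔ subTensor11 ⊤ J) ∧
    (∀ x ∈ J, ε x = 0) ∧
    (∀ x ∈ J, S x ∈ J) := by
  have : Fact p.Prime := ⟨hp⟩
  have : CharP (MonoidAlgebra k G) p := charP_of_injective_algebraMap' k p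
  have hnormal := MonoidAlgebra.range_mulLeft_eq_range_mulRight (k := k)
    (conj_rack_quotient_mem_powers hα0 hα1 hrack hXgen)
  have hJ := eq_range_mulRight_of_minimal hnormal.le hJmem hJ2 hJmin
  have hnilpotent : (MonoidAlgebra.of k G (φ 0 * (φ 1)⁻¹) - 1) ^ p = 0 :=
    sub_one_pow_char_eq_zero p (by rw [← map_pow, rack_quotient_pow_char hα0 hα1 hrack, map_one])
  refine ⟨?_, ?_, ?_, fun x hx ↦ MonoidAlgebra.comul_mem_sup_of_mem hJ Δ hΔ hx,
    fun x hx ↦ MonoidAlgebra.counit_eq_zero_of_mem_range_mulRight ε hε (hJ ▸ hx),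
    fun x hx ↦ MonoidAlgebra.antipode_mem_of_mem hJ hJ2 S hS hx⟩
  · ext x
    simp only [SetLike.mem_coe, hJ, LinearMap.mem_range, LinearMap.mulRight_apply, eq_comm,
      Set.mem_ofPred_eq]
  · ext x
    simp only [SetLike.mem_coe, hJ, ← hnormal, LinearMap.mem_range, LinearMap.mulLeft_apply,
      eq_comm, Set.mem_ofPred_eq]
  · rw [eq_bot_iff, hJ]
    refine (range_mulRight_pow_le hnormal.le p).trans ?_
    rw [hnilpotent, LinearMap.mulRight_zero_eq_zero, LinearMap.range_zero]

/-- Let `p` be a prime, `α ∈ ℤ/pℤ \ {0,1}`, `G` a group, `X` a conjugacy class of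
`G` generating `G`, and `φ : ℤ/pℤ → X` a bijection with `φ(i)φ(j)φ(i)⁻¹ = φ((1−α)i + αj)`.
Set `γ = φ(0)φ(1)⁻¹`. Let `k` be a field of characteristic `p` and let `J` be the two-sided
ideal of `kG` generated by `γ − 1`. Then `J = kG(γ−1) = (γ−1)kG`, `J^p = 0` (so `J` is
nilpotent), and `J` is a Hopf ideal: `Δ(J) ⊆ J ⊗ kG + kG ⊗ J`, `ε(J) = 0`, `S(J) ⊆ J`. -/
theorem stmt11 {k : Type*} [Field k] {G : Type*} [Group G]
    (p : ℕ) (hp : p.Prime) [CharP k p]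
    (α : ZMod p) (hα0 : α ≠ 0) (hα1 : α ≠ 1)
    (φ : ZMod p → G) (hφinj : Function.Injective φ)
    (hXconj : ∃ x : G, Set.range φ = {y | IsConj x y})
    (hXgen : Subgroup.closure (Set.range φ) = ⊤)
    (hrack : ∀ i j : ZMod p, φ i * φ j * (φ i)⁻¹ = φ ((1 - α) * i + α * j))
    -- the structure maps of the Hopf algebra kG
    (Δ : MonoidAlgebra k G →ₗ[k] MonoidAlgebra k G ⊗[k] MonoidAlgebra k G)
    (hΔ : ∀ g : G, Δ (MonoidAlgebra.of k G g) =
      MonoidAlgebra.of k G g ⊗ₜ[k] MonoidAlgebra.of k G g)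
    (ε : MonoidAlgebra k G →ₗ[k] k)
    (hε : ∀ g : G, ε (MonoidAlgebra.of k G g) = 1)
    (S : MonoidAlgebra k G →ₗ[k] MonoidAlgebra k G)
    (hS : ∀ g : G, S (MonoidAlgebra.of k G g) = MonoidAlgebra.of k G g⁻¹)
    -- J is the two-sided ideal of kG generated by γ - 1
    (J : Submodule k (MonoidAlgebra k G))
    (hJmem : MonoidAlgebra.of k G (φ 0 * (φ 1)⁻¹) - 1 ∈ J)
    (hJ2 : ∀ x ∈ J, ∀ a : MonoidAlgebra k G, a * x ∈ J ∧ x * a ∈ J)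
    (hJmin : ∀ I : Submodule k (MonoidAlgebra k G),
      MonoidAlgebra.of k G (φ 0 * (φ 1)⁻¹) - 1 ∈ I →
      (∀ x ∈ I, ∀ a : MonoidAlgebra k G, a * x ∈ I ∧ x * a ∈ I) → J ≤ I) :
    (J : Set (MonoidAlgebra k G)) =
        {x | ∃ a : MonoidAlgebra k G, x = a * (MonoidAlgebra.of k G (φ 0 * (φ 1)⁻¹) - 1)} ∧
    (J : Set (MonoidAlgebra k G)) =
        {x | ∃ a : MonoidAlgebra k G, x = (MonoidAlgebra.of k G (φ 0 * (φ 1)⁻¹) - 1) * a} ∧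
    J ^ p = ⊥ ∧
    (∀ x ∈ J, Δ x ∈ subTensor11 J ⊤ ⊔ subTensor11 ⊤ J) ∧
    (∀ x ∈ J, ε x = 0) ∧
    (∀ x ∈ J, S x ∈ J) :=
  stmt11_general p hp α hα0 hα1 φ hXgen hrack Δ hΔ ε hε S hS J hJmem hJ2 hJmin
end
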